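/- Let n ≥ 3 and let F = x_0^n + G(x_1,…,x_b) ∈ ℂ[x_0,…,x_b], where G is a form of degree n not involving x_0 which is honest as a form in the b variables x_1,…,x_b. Then the cardinality of the set of points [v] ∈ ℙ^b with F(v) ≠ 0 and rk 𝓗_F(v) = 1 equals 1 plus the cardinality of the set of points [w] ∈ ℙ^{b-1} with G(w) ≠ 0 and rk 𝓗_G(w) = 1. -/

import Mathlib

open MvPolynomial

/-- The tensor of `k`-th order partial derivatives of `F`, evaluated at `v`:
its `(i_1, …, i_k)` entry is `(∂^k F / ∂x_{i_1} ⋯ ∂x_{i_k})(v)`. -/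
noncomputable def HF {σ : Type*} [DecidableEq σ] (k : ℕ) (F : MvPolynomial σ ℂ) (v : σ → ℂ) :
    (Fin k → σ) → ℂ := fun idx =>
  eval v ((List.ofFn idx).foldl (fun p i => pderiv i p) F)

/-- A tensor of type `m × ⋯ × m` (`k` factors) has rank one if it is nonzero and is an
outer product of `k` vectors. -/
def IsRankOne {k m : ℕ} (T : (Fin k → Fin m) → ℂ) : Prop :=
  T ≠ 0 ∧ ∃ v : Fin k → Fin m → ℂ, ∀ j, T j = ∏ i, v i (j i)

/-- The rank of a tensor: the least `r` such that `T` is a sum of `r` rank-one tensors. -/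
noncomputable def tensorRank {k m : ℕ} (T : (Fin k → Fin m) → ℂ) : ℕ :=
  sInf {r | ∃ f : Fin r → ((Fin k → Fin m) → ℂ), (∀ s, IsRankOne (f s)) ∧ T = ∑ s, f s}


/-!
Write `v = (a, w)`. Since no monomial of `F = x_0^n + G` mixes `x_0` with another variable,
`𝓗_F(v)` is block diagonal: its entry at `(0, …, 0)` is `n! · a`, its entries with all indices
nonzero form `𝓗_G(w)`, and all other entries vanish. A rank-one tensor of order `n - 1 ≥ 2` has
at most one nonzero block. If `a ≠ 0` this forces `𝓗_G(w) = 0`, i.e. `w = 0` by honesty of `G`,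
which gives the single point `[1 : 0 : ⋯ : 0]`; if `a = 0`, then `[v]` is counted exactly when
`[w]` is counted for `G`.
-/
namespace MvPolynomial

section PDerivList

variable {R σ τ : Type*} [CommSemiring R]

noncomputable def pderivList : List σ → MvPolynomial σ R →ₗ[R] MvPolynomial σ R
  | [] => LinearMap.id
  | i :: L => pderivList L ∘ₗ (pderiv i).toLinearMap

@[simp]
theorem pderivList_nil (P : MvPolynomial σ R) : pderivList [] P = P := rfl

@[simp]
theorem pderivList_cons (i : σ) (L : List σ) (P : MvPolynomial σ R) :
    pderivList (i :: L) P = pderivList L (pderiv i P) := rfl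

theorem foldl_pderiv (L : List σ) (P : MvPolynomial σ R) :
    L.foldl (fun p i => pderiv i p) P = pderivList L P := by
  induction L generalizing P with
  | nil => rfl
  | cons i L ih => exact ih _

theorem pderivList_rename {f : σ → τ} (hf : Function.Injective f) (L : List σ)
    (P : MvPolynomial σ R) :
    pderivList (L.map f) (rename f P) = rename f (pderivList L P) := by
  induction L generalizing P with
  | nil => rfl
  | cons i L ih => simp only [List.map_cons, pderivList_cons, pderiv_rename hf, ih]

theorem pderiv_rename_of_notMem_range {f : σ → τ} {i : τ} (hi : i ∉ Set.range f)
    (P : MvPolynomial σ R) : pderiv i (rename f P) = 0 := by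
  classical
  refine pderiv_eq_zero_of_notMem_vars fun h => hi ?_
  obtain ⟨j, -, rfl⟩ := Finset.mem_image.mp (vars_rename f P h)
  exact ⟨j, rfl⟩

theorem pderivList_rename_eq_zero {f : σ → τ} (hf : Function.Injective f) {L : List τ}
    (hL : ∃ i ∈ L, i ∉ Set.range f) (P : MvPolynomial σ R) :
    pderivList L (rename f P) = 0 := by
  induction L generalizing P with
  | nil => simp at hL
  | cons a L ih =>
    rw [pderivList_cons]
    by_cases ha : a ∈ Set.range f
    · obtain ⟨j, rfl⟩ := ha
      obtain ⟨i, hi, hif⟩ := hL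
      rw [pderiv_rename hf]
      refine ih ⟨i, ?_, hif⟩ _
      rcases List.mem_cons.mp hi with rfl | hi
      · exact absurd ⟨j, rfl⟩ hif
      · exact hi
    · rw [pderiv_rename_of_notMem_range ha, map_zero]

theorem pderivList_X_pow [DecidableEq σ] (L : List σ) (i : σ) (m : ℕ) :
    pderivList L (X i ^ m : MvPolynomial σ R) =
      if ∀ j ∈ L, j = i then m.descFactorial L.length • X i ^ (m - L.length) else 0 := by
  induction L generalizing m with
  | nil => simp
  | cons a L ih =>
    rw [pderivList_cons, pderiv_pow]
    by_cases ha : a = i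
    · subst ha
      have hdesc : m * (m - 1).descFactorial L.length = m.descFactorial (L.length + 1) := by
        cases m with
        | zero => simp
        | succ m => rw [Nat.add_sub_cancel, Nat.succ_descFactorial_succ]
      rw [pderiv_X_self, mul_one, ← nsmul_eq_mul, map_nsmul, ih]
      simp only [List.forall_mem_cons, true_and, List.length_cons]
      split_ifs
      · rw [smul_smul, hdesc, Nat.sub_sub, add_comm 1]
      · rw [smul_zero]
    · simp [pderiv_X_of_ne (Ne.symm ha), ha]

theorem IsHomogeneous.pderivList {P : MvPolynomial σ R} {m : ℕ} (hP : P.IsHomogeneous m)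
    (L : List σ) : (pderivList L P).IsHomogeneous (m - L.length) := by
  induction L generalizing P m with
  | nil => simpa using hP
  | cons i L ih =>
    simpa [Nat.sub_sub, add_comm 1] using ih hP.pderiv

theorem IsHomogeneous.eval_zero {P : MvPolynomial σ R} {m : ℕ} (hP : P.IsHomogeneous m)
    (hm : m ≠ 0) : eval 0 P = 0 := by
  rw [MvPolynomial.eval_zero, constantCoeff_eq]
  exact hP.coeff_eq_zero (by simpa using hm.symm)

end PDerivList

end MvPolynomial

section RankOne

variable {k m : ℕ}

theorem tensorRank_eq_one_iff (T : (Fin k → Fin m) → ℂ) : tensorRank T = 1 ↔ IsRankOne T := by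
  set S := {r | ∃ f : Fin r → ((Fin k → Fin m) → ℂ), (∀ s, IsRankOne (f s)) ∧ T = ∑ s, f s}
  have h1 : IsRankOne T → 1 ∈ S :=
    fun hT => ⟨fun _ => T, fun _ => hT, by rw [Fin.sum_univ_one]⟩
  change sInf S = 1 ↔ _
  constructor
  · intro h
    obtain ⟨f, hf, hT⟩ : 1 ∈ S := h ▸ Nat.sInf_mem (Nat.nonempty_of_sInf_eq_succ h)
    rw [hT, Fin.sum_univ_one]
    exact hf 0
  · intro hT
    refine le_antisymm (Nat.sInf_le (h1 hT)) (Nat.one_le_iff_ne_zero.mpr fun h0 => ?_)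
    obtain ⟨f, -, hf⟩ : 0 ∈ S := h0 ▸ Nat.sInf_mem ⟨1, h1 hT⟩
    exact hT.1 (by simpa using hf)

theorem isRankOne_single (hk : k ≠ 0) (idx : Fin k → Fin m) {c : ℂ} (hc : c ≠ 0) :
    IsRankOne (Pi.single idx c) := by
  let i₀ : Fin k := ⟨0, Nat.pos_of_ne_zero hk⟩
  refine ⟨by simpa using hc, fun i => Pi.single (idx i) (if i = i₀ then c else 1), fun j => ?_⟩
  by_cases hj : j = idx
  · subst hj
    simp
  · obtain ⟨i, hi⟩ := Function.ne_iff.mp hj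
    rw [Pi.single_eq_of_ne hj, Finset.prod_eq_zero (Finset.mem_univ i)]
    exact Pi.single_eq_of_ne hi _

end RankOne

section Block

variable {k b : ℕ} {T : (Fin k → Fin (b + 1)) → ℂ}

theorem exists_eq_succ_comp {idx : Fin k → Fin (b + 1)} (h : ∀ i, idx i ≠ 0) :
    ∃ j : Fin k → Fin b, idx = Fin.succ ∘ j :=
  ⟨fun i => (idx i).pred (h i), funext fun _ => (Fin.succ_pred _ _).symm⟩

theorem isRankOne_iff_succ_of_apply_eq_zero (hzero : ∀ idx, (∃ i, idx i = 0) → T idx = 0) :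
    IsRankOne T ↔ IsRankOne fun j => T (Fin.succ ∘ j) := by
  have hT : T = 0 ↔ (fun j => T (Fin.succ ∘ j)) = 0 := by
    refine ⟨fun h => funext fun j => congrFun h _, fun h => funext fun idx => ?_⟩
    by_cases h0 : ∃ i, idx i = 0
    · exact hzero idx h0
    · push Not at h0
      obtain ⟨j, rfl⟩ := exists_eq_succ_comp h0
      exact congrFun h j
  refine and_congr hT.not ⟨fun ⟨u, hu⟩ => ⟨fun i j => u i j.succ, fun j => hu _⟩,
    fun ⟨u, hu⟩ => ⟨fun i => Fin.cons 0 (u i), fun idx => ?_⟩⟩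
  by_cases h0 : ∃ i, idx i = 0
  · obtain ⟨i, hi⟩ := h0
    rw [hzero idx ⟨i, hi⟩, Finset.prod_eq_zero (Finset.mem_univ i) (by simp [hi])]
  · push Not at h0
    obtain ⟨j, rfl⟩ := exists_eq_succ_comp h0
    simp [hu]

theorem IsRankOne.apply_succ_comp_eq_zero (hk : 2 ≤ k)
    (hmix : ∀ idx, (∃ i, idx i = 0) → (∃ i, idx i ≠ 0) → T idx = 0) (hT : IsRankOne T)
    (h0 : T 0 ≠ 0) (j : Fin k → Fin b) : T (Fin.succ ∘ j) = 0 := by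
  obtain ⟨-, u, hu⟩ := hT
  by_contra hj
  have hu0 : ∀ i, u i 0 ≠ 0 := fun i hi =>
    h0 (by rw [hu]; exact Finset.prod_eq_zero (Finset.mem_univ i) hi)
  have hu1 : ∀ i, u i (j i).succ ≠ 0 := fun i hi =>
    hj (by rw [hu]; exact Finset.prod_eq_zero (Finset.mem_univ i) hi)
  -- every factor of the product formula at `mixed` is nonzero, yet `mixed` is a mixed index
  let i₀ : Fin k := ⟨0, by omega⟩
  let mixed := Function.update (Fin.succ ∘ j) i₀ 0
  have hmixed : T mixed = 0 :=
    hmix mixed ⟨i₀, by simp [mixed]⟩ ⟨⟨1, by omega⟩, by simp [mixed, i₀, Fin.ext_iff]⟩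
  refine Finset.prod_ne_zero_iff.mpr (fun i _ => ?_) ((hu mixed).symm.trans hmixed)
  by_cases hi : i = i₀
  · simpa [mixed, hi] using hu0 i₀
  · simpa [mixed, hi] using hu1 i

theorem isRankOne_iff_of_mixed_eq_zero (hk : 2 ≤ k)
    (hmix : ∀ idx, (∃ i, idx i = 0) → (∃ i, idx i ≠ 0) → T idx = 0) :
    IsRankOne T ↔ (T 0 ≠ 0 ∧ (fun j => T (Fin.succ ∘ j)) = 0) ∨
      (T 0 = 0 ∧ IsRankOne fun j => T (Fin.succ ∘ j)) := by
  by_cases h0 : T 0 = 0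
  · simp only [h0, ne_eq, not_true_eq_false, false_and, true_and, false_or]
    refine isRankOne_iff_succ_of_apply_eq_zero fun idx hidx => ?_
    by_cases h : ∃ i, idx i ≠ 0
    · exact hmix idx hidx h
    · push Not at h
      rwa [show idx = 0 from funext h]
  · simp only [h0, ne_eq, not_false_eq_true, true_and, false_and, or_false]
    refine ⟨fun hT => funext (hT.apply_succ_comp_eq_zero hk hmix h0), fun hB => ?_⟩
    have hsingle : T = Pi.single 0 (T 0) := by
      funext idx
      by_cases hidx : idx = 0
      · simp [hidx]
      rw [Pi.single_eq_of_ne hidx]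
      by_cases h : ∃ i, idx i = 0
      · exact hmix idx h (by by_contra! hc; exact hidx (funext hc))
      · push Not at h
        obtain ⟨j, rfl⟩ := exists_eq_succ_comp h
        exact congrFun hB j
    rw [hsingle]
    exact isRankOne_single (by omega) 0 h0

end Block

section XPowAddRename

def IsRankOnePoint {m : ℕ} (k : ℕ) (F : MvPolynomial (Fin m) ℂ) (v : Fin m → ℂ) : Prop :=
  eval v F ≠ 0 ∧ tensorRank (HF k F v) = 1

theorem HF_eq_eval_pderivList {σ : Type*} [DecidableEq σ] (k : ℕ) (F : MvPolynomial σ ℂ)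
    (v : σ → ℂ) (idx : Fin k → σ) : HF k F v idx = eval v (pderivList (List.ofFn idx) F) := by
  rw [HF, foldl_pderiv]

theorem HF_zero_of_isHomogeneous {σ : Type*} [DecidableEq σ] {F : MvPolynomial σ ℂ} {n k : ℕ}
    (hF : F.IsHomogeneous n) (hk : k < n) : HF k F 0 = 0 :=
  funext fun idx => by
    rw [HF_eq_eval_pderivList, (hF.pderivList _).eval_zero (by simp; omega), Pi.zero_apply]

variable {b n k : ℕ} (G : MvPolynomial (Fin b) ℂ) (v : Fin (b + 1) → ℂ)

theorem HF_X_pow_add_rename_zero (hk : k ≠ 0) :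
    HF k (X 0 ^ n + rename Fin.succ G) v 0 = n.descFactorial k * v 0 ^ (n - k) := by
  have h0 : ∃ i ∈ List.ofFn (0 : Fin k → Fin (b + 1)), i ∉ Set.range Fin.succ :=
    ⟨0, List.mem_ofFn.mpr ⟨⟨0, by omega⟩, rfl⟩, by simp⟩
  rw [HF_eq_eval_pderivList, map_add, pderivList_rename_eq_zero (Fin.succ_injective b) h0,
    pderivList_X_pow, if_pos (by simp)]
  simp

theorem HF_X_pow_add_rename_succ (hk : k ≠ 0) (j : Fin k → Fin b) :
    HF k (X 0 ^ n + rename Fin.succ G) v (Fin.succ ∘ j) = HF k G (Fin.tail v) j := by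
  have : Nonempty (Fin k) := ⟨⟨0, by omega⟩⟩
  rw [HF_eq_eval_pderivList, HF_eq_eval_pderivList, map_add, pderivList_X_pow, if_neg (by simp),
    zero_add, ← List.map_ofFn, pderivList_rename (Fin.succ_injective b), eval_rename]
  rfl

theorem HF_X_pow_add_rename_of_mixed {idx : Fin k → Fin (b + 1)} (h0 : ∃ i, idx i = 0)
    (h1 : ∃ i, idx i ≠ 0) : HF k (X 0 ^ n + rename Fin.succ G) v idx = 0 := by
  obtain ⟨i₀, hi₀⟩ := h0
  obtain ⟨i₁, hi₁⟩ := h1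
  rw [HF_eq_eval_pderivList, map_add, pderivList_X_pow,
    if_neg fun h => hi₁ (h _ (List.mem_ofFn.mpr ⟨i₁, rfl⟩)),
    pderivList_rename_eq_zero (Fin.succ_injective b)
      ⟨0, List.mem_ofFn.mpr ⟨i₀, hi₀⟩, by simp⟩, add_zero, map_zero]

theorem isRankOnePoint_X_pow_add_rename_cons_iff (hn : 3 ≤ n) (hG : G.IsHomogeneous n)
    (hGhonest : ∀ w : Fin b → ℂ, w ≠ 0 → HF (n - 1) G w ≠ 0) (a : ℂ) (w : Fin b → ℂ) :
    IsRankOnePoint (n - 1) (X 0 ^ n + rename Fin.succ G) (Fin.cons a w) ↔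
      (a ≠ 0 ∧ w = 0) ∨ (a = 0 ∧ IsRankOnePoint (n - 1) G w) := by
  have hk : n - 1 ≠ 0 := by omega
  have hblock : (fun j => HF (n - 1) (X 0 ^ n + rename Fin.succ G) (Fin.cons a w) (Fin.succ ∘ j))
      = HF (n - 1) G w :=
    funext fun j => by rw [HF_X_pow_add_rename_succ G _ hk, Fin.tail_cons]
  have hGw : HF (n - 1) G w = 0 ↔ w = 0 :=
    ⟨not_imp_not.mp (hGhonest w), fun h => h ▸ HF_zero_of_isHomogeneous hG (by omega)⟩
  have hdesc : (n.descFactorial (n - 1) : ℂ) ≠ 0 := by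
    simp [Nat.descFactorial_eq_zero_iff_lt]
  rw [IsRankOnePoint, IsRankOnePoint, tensorRank_eq_one_iff, tensorRank_eq_one_iff,
    isRankOne_iff_of_mixed_eq_zero (by omega) fun _ => HF_X_pow_add_rename_of_mixed G _,
    hblock, hGw, HF_X_pow_add_rename_zero G _ hk, Fin.cons_zero, Nat.sub_sub_self (by omega),
    pow_one]
  simp only [map_add, map_pow, eval_X, eval_rename, Fin.cons_zero, Fin.cons_comp_succ]
  by_cases ha : a = 0
  · simp [ha, zero_pow (by omega : n ≠ 0)]
  · simp only [ne_eq, mul_eq_zero, hdesc, ha, or_self, not_false_eq_true, true_and, false_and,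
      or_false, and_iff_right_iff_imp]
    rintro rfl
    rw [hG.eval_zero (by omega), add_zero]
    exact pow_ne_zero n ha

end XPowAddRename

section Projective

open Projectivization
open scoped LinearAlgebra.Projectivization

variable {K : Type*} [Field K] {b : ℕ}

theorem encard_setOf_mk_of_cons_iff (Q : (Fin (b + 1) → K) → Prop) (R : (Fin b → K) → Prop)
    (hQ : ∀ a w, Q (Fin.cons a w) ↔ (a ≠ 0 ∧ w = 0) ∨ (a = 0 ∧ R w)) :
    {p : ℙ K (Fin (b + 1) → K) | ∃ (v : Fin (b + 1) → K) (hv : v ≠ 0), mk K v hv = p ∧ Q v}.encard =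
      1 + {p : ℙ K (Fin b → K) | ∃ (w : Fin b → K) (hw : w ≠ 0), mk K w hw = p ∧ R w}.encard := by
  let ι : (Fin b → K) →ₗ[K] (Fin (b + 1) → K) :=
    (Fin.consLinearEquiv K fun _ => K).toLinearMap ∘ₗ LinearMap.inr K K _
  have hι : Function.Injective ι :=
    (Fin.consLinearEquiv K fun _ => K).injective.comp (LinearMap.inr_injective (R := K))
  have hιw : ∀ w, ι w = Fin.cons 0 w := fun _ => rfl
  have he : (Fin.cons 1 0 : Fin (b + 1) → K) ≠ 0 := fun h => one_ne_zero (congrFun h 0)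
  set SR := {p : ℙ K (Fin b → K) | ∃ (w : Fin b → K) (hw : w ≠ 0), mk K w hw = p ∧ R w}
  have hcone : {p | ∃ (v : Fin (b + 1) → K) (hv : v ≠ 0), mk K v hv = p ∧ Q v} =
      insert (mk K _ he) (map ι hι '' SR) := by
    ext p
    simp only [Set.mem_ofPred_eq, Set.mem_insert_iff, Set.mem_image]
    constructor
    · rintro ⟨v, hv, rfl, hQv⟩
      obtain ⟨a, w, rfl⟩ : ∃ a w, v = Fin.cons a w :=
        ⟨v 0, Fin.tail v, (Fin.cons_self_tail v).symm⟩
      rcases (hQ a w).mp hQv with ⟨ha, rfl⟩ | ⟨rfl, hR⟩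
      · refine Or.inl ((mk_eq_mk_iff' K _ _ hv he).mpr ⟨a, funext fun i => ?_⟩)
        refine Fin.cases ?_ (fun _ => ?_) i <;> simp
      · have hw : w ≠ 0 := by
          rintro rfl
          exact hv (funext fun i => Fin.cases rfl (fun _ => rfl) i)
        exact Or.inr ⟨mk K w hw, ⟨w, hw, rfl, hR⟩, map_mk _ _ _ _⟩
    · rintro (rfl | ⟨_, ⟨w, hw, rfl, hR⟩, rfl⟩)
      · exact ⟨_, he, rfl, (hQ 1 0).mpr (Or.inl ⟨one_ne_zero, rfl⟩)⟩
      · exact ⟨ι w, _, (map_mk _ _ _ _).symm, (hQ 0 w).mpr (Or.inr ⟨rfl, hR⟩)⟩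
  have hnotMem : mk K _ he ∉ map ι hι '' SR := by
    rintro ⟨_, ⟨w, hw, rfl, -⟩, h⟩
    obtain ⟨c, hc⟩ := (mk_eq_mk_iff' K _ _ he _).mp (h.symm.trans (map_mk _ _ _ _))
    simpa [hιw] using congrFun hc 0
  rw [hcone, Set.encard_insert_of_notMem hnotMem, (map_injective ι hι).injOn.encard_image,
    add_comm]

end Projective

/-- Let `n ≥ 3` and `F = x_0^n + G(x_1, …, x_b)` with `G` a form of degree `n`
not involving `x_0`, honest as a form in the `b` variables `x_1, …, x_b`. Then the number of
points `[v] ∈ ℙ^b` with `F(v) ≠ 0` and `rk 𝓗_F(v) = 1` equals `1` plus the number of points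
`[w] ∈ ℙ^{b-1}` with `G(w) ≠ 0` and `rk 𝓗_G(w) = 1`. -/
theorem stmt_12 (b n : ℕ) (hn : 3 ≤ n)
    (G : MvPolynomial (Fin b) ℂ) (hG : G.IsHomogeneous n)
    (hGhonest : ∀ w : Fin b → ℂ, w ≠ 0 → HF (n - 1) G w ≠ 0) :
    {p : Projectivization ℂ (Fin (b + 1) → ℂ) |
        ∃ (v : Fin (b + 1) → ℂ) (hv : v ≠ 0), Projectivization.mk ℂ v hv = p ∧
          eval v (X 0 ^ n + rename Fin.succ G) ≠ 0 ∧
          tensorRank (HF (n - 1) (X 0 ^ n + rename Fin.succ G) v) = 1}.encard =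
      1 + {p : Projectivization ℂ (Fin b → ℂ) |
        ∃ (w : Fin b → ℂ) (hw : w ≠ 0), Projectivization.mk ℂ w hw = p ∧
          eval w G ≠ 0 ∧ tensorRank (HF (n - 1) G w) = 1}.encard :=
  encard_setOf_mk_of_cons_iff _ _ (isRankOnePoint_X_pow_add_rename_cons_iff G hn hG hGhonest)
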